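/- Covariance bound for secondary fields (Corollary 2.7, deterministic kernel form): Fix M > 1, β < 1, an integer r ≥ 0, A > 0, and integers j ≤ k, j ≤ k'. Let C : ℝ × ℝ → ℝ have a continuous mixed second partial derivative satisfying |∂_v ∂_w C(v,w)| ≤ A · M^{(2−2β)j} / (1 + M^{j}|v−w|)^{r} for all v,w ∈ ℝ. For x ∈ ℝ let Δ^k_x := [⌊M^k x⌋ M^{−k}, (⌊M^k x⌋+1) M^{−k}] be the M-adic interval of scale k containing x, and define the doubly averaged-difference kernel (δ^k ⊗ δ^{k'} C)(x,y) := C(x,y) − M^{k}∫_{Δ^k_x} C(u,y) du − M^{k'}∫_{Δ^{k'}_y} C(x,w) dw + M^{k+k'} ∫_{Δ^k_x} ∫_{Δ^{k'}_y} C(u,w) du dw. Then there is a constant K' depending only on A, r and M (not on j, k, k', x, y or C) such that |(δ^k ⊗ δ^{k'} C)(x,y)| ≤ K' · M^{−2βj} · M^{−(k−j)} · M^{−(k'−j)} / (1 + M^{j}|x−y|)^{r}. -/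

import Mathlib

open MeasureTheory

/-- The `M`-adic interval of scale `k` containing `x`:
`Δ^k_x = [⌊M^k x⌋ M^{−k}, (⌊M^k x⌋ + 1) M^{−k}]`. -/
noncomputable def madicInterval (M : ℝ) (k : ℤ) (x : ℝ) : Set ℝ :=
  Set.Icc ((⌊M ^ (k : ℝ) * x⌋ : ℝ) * M ^ (-(k : ℝ)))
    (((⌊M ^ (k : ℝ) * x⌋ : ℝ) + 1) * M ^ (-(k : ℝ)))

/-- The doubly averaged-difference kernel
`(δ^k ⊗ δ^{k'} C)(x,y) = C(x,y) − M^k ∫_{Δ^k_x} C(u,y) du − M^{k'} ∫_{Δ^{k'}_y} C(x,w) dw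
  + M^{k+k'} ∫_{Δ^k_x} ∫_{Δ^{k'}_y} C(u,w) du dw`. -/
noncomputable def doubleAvgDiff (M : ℝ) (k k' : ℤ) (C : ℝ → ℝ → ℝ) (x y : ℝ) : ℝ :=
  C x y - M ^ (k : ℝ) * (∫ u in madicInterval M k x, C u y)
    - M ^ (k' : ℝ) * (∫ w in madicInterval M k' y, C x w)
    + M ^ ((k : ℝ) + (k' : ℝ)) *
        (∫ u in madicInterval M k x, ∫ w in madicInterval M k' y, C u w)

/-! The kernel is the average, over `u ∈ Δ^k_x` and `w ∈ Δ^{k'}_y`, of the mixed difference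
`C x y - C u y - C x w + C u w = ∫_w^y ∫_u^x ∂_v ∂_w C`, hence at most
`sup |∂_v ∂_w C| · M^{-k} M^{-k'}` over the rectangle. Since `j ≤ k, k'`, moving `x, y` inside
their intervals changes `M^j |x - y|` by at most `2`, so `1 + M^j |x - y| ≤ 3 (1 + M^j |v - t|)`
and the decay of `∂_v ∂_w C` survives up to a factor `3^r`. -/

open Set
open scoped Interval

theorem integral_integral_mixedDiff {α β : Type*} [MeasurableSpace α] [MeasurableSpace β]
    {μ : Measure α} {ν : Measure β} [IsProbabilityMeasure μ] [IsProbabilityMeasure ν]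
    (F : α → β → ℝ) (x : α) (y : β) (hFy : Integrable (F · y) μ) (hF : ∀ u, Integrable (F u) ν)
    (hFint : Integrable (fun u => ∫ w, F u w ∂ν) μ) :
    ∫ u, ∫ w, (F x y - F u y - F x w + F u w) ∂ν ∂μ
      = F x y - ∫ u, F u y ∂μ - ∫ w, F x w ∂ν + ∫ u, ∫ w, F u w ∂ν ∂μ := by
  have inner : ∀ u, ∫ w, (F x y - F u y - F x w + F u w) ∂ν
      = F x y - F u y - ∫ w, F x w ∂ν + ∫ w, F u w ∂ν := fun u => by
    rw [integral_add (f := fun w => F x y - F u y - F x w)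
        ((integrable_const _).sub (hF x)) (hF u),
      integral_sub (integrable_const _) (hF x), integral_const, probReal_univ, one_smul]
  simp only [inner]
  rw [integral_add (f := fun u => F x y - F u y - ∫ w, F x w ∂ν)
      (((integrable_const _).sub hFy).sub (integrable_const _)) hFint,
    integral_sub (f := fun u => F x y - F u y) ((integrable_const _).sub hFy) (integrable_const _),
    integral_sub (integrable_const _) hFy]
  simp only [integral_const, probReal_univ, one_smul]

section MixedDerivative

variable {C Cw g : ℝ → ℝ → ℝ}

theorem mixedDiff_eq_integral_integral (hCw : ∀ v w, HasDerivAt (fun w' => C v w') (Cw v w) w)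
    (hg : ∀ v w, HasDerivAt (fun v' => Cw v' w) (g v w) v)
    (hgc : Continuous fun p : ℝ × ℝ => g p.1 p.2) (x y u w : ℝ) :
    C x y - C u y - C x w + C u w = ∫ t in w..y, ∫ v in u..x, g v t := by
  have hCw_sub : ∀ t, ∫ v in u..x, g v t = Cw x t - Cw u t := fun t =>
    intervalIntegral.integral_eq_sub_of_hasDerivAt (fun v _ => hg v t)
      ((hgc.comp (continuous_id.prodMk continuous_const)).intervalIntegrable _ _)
  have hcont : Continuous fun t => ∫ v in u..x, g v t :=
    intervalIntegral.continuous_parametric_intervalIntegral_of_continuous' (f := fun t v => g v t)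
      (hgc.comp (continuous_snd.prodMk continuous_fst)) u x
  rw [intervalIntegral.integral_eq_sub_of_hasDerivAt (f := fun t => C x t - C u t)
    (fun t _ => ((hCw x t).sub (hCw u t)).congr_deriv (hCw_sub t).symm)
    (hcont.intervalIntegrable _ _)]
  ring

theorem abs_mixedDiff_le (hCw : ∀ v w, HasDerivAt (fun w' => C v w') (Cw v w) w)
    (hg : ∀ v w, HasDerivAt (fun v' => Cw v' w) (g v w) v)
    (hgc : Continuous fun p : ℝ × ℝ => g p.1 p.2) {x y u w B : ℝ}
    (hB : ∀ v ∈ uIcc u x, ∀ t ∈ uIcc w y, |g v t| ≤ B) :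
    |C x y - C u y - C x w + C u w| ≤ B * |x - u| * |y - w| := by
  rw [mixedDiff_eq_integral_integral hCw hg hgc]
  have hinner : ∀ t ∈ Ι w y, ‖∫ v in u..x, g v t‖ ≤ B * |x - u| := fun t ht =>
    intervalIntegral.norm_integral_le_of_norm_le_const fun v hv =>
      hB v (uIoc_subset_uIcc hv) t (uIoc_subset_uIcc ht)
  exact intervalIntegral.norm_integral_le_of_norm_le_const hinner

end MixedDerivative

theorem one_add_mul_abs_sub_le_three_mul {a x y v t : ℝ} (ha : 0 ≤ a)
    (hxv : a * |x - v| ≤ 1) (hty : a * |t - y| ≤ 1) :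
    1 + a * |x - y| ≤ 3 * (1 + a * |v - t|) := by
  have htri : |x - y| ≤ |x - v| + |v - t| + |t - y| :=
    (abs_sub_le x t y).trans (add_le_add_left (abs_sub_le x v t) _)
  nlinarith [mul_le_mul_of_nonneg_left htri ha, abs_nonneg (v - t)]

section MadicInterval

variable {M : ℝ} {k : ℤ} {x : ℝ}

theorem mem_madicInterval (hM : 0 < M) : x ∈ madicInterval M k x := by
  have hMk : 0 < M ^ (k : ℝ) := Real.rpow_pos_of_pos hM _
  rw [madicInterval, Real.rpow_neg hM.le, ← div_eq_mul_inv, ← div_eq_mul_inv,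
    mem_Icc, div_le_iff₀ hMk, le_div_iff₀ hMk, mul_comm x]
  exact ⟨Int.floor_le _, (Int.lt_floor_add_one _).le⟩

theorem abs_sub_le_of_mem_madicInterval {v v' : ℝ} (hv : v ∈ madicInterval M k x)
    (hv' : v' ∈ madicInterval M k x) : |v - v'| ≤ M ^ (-(k : ℝ)) := by
  obtain ⟨hv₁, hv₂⟩ := hv
  obtain ⟨hv'₁, hv'₂⟩ := hv'
  rw [abs_sub_le_iff]
  constructor <;> linarith

theorem rpow_mul_abs_sub_le_one_of_mem_madicInterval (hM : 1 ≤ M) {j : ℤ} (hjk : j ≤ k)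
    {v v' : ℝ} (hv : v ∈ madicInterval M k x) (hv' : v' ∈ madicInterval M k x) :
    M ^ (j : ℝ) * |v - v'| ≤ 1 := by
  have hM0 : 0 < M := zero_lt_one.trans_le hM
  calc M ^ (j : ℝ) * |v - v'| ≤ M ^ (j : ℝ) * M ^ (-(k : ℝ)) :=
        mul_le_mul_of_nonneg_left (abs_sub_le_of_mem_madicInterval hv hv') (by positivity)
    _ = M ^ ((j : ℝ) - k) := by rw [← Real.rpow_add hM0, sub_eq_add_neg]
    _ ≤ 1 := Real.rpow_le_one_of_one_le_of_nonpos hM (by simpa using hjk)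

theorem volume_madicInterval :
    volume (madicInterval M k x) = ENNReal.ofReal (M ^ (-(k : ℝ))) := by
  rw [madicInterval, Real.volume_Icc]
  ring_nf

end MadicInterval

section MadicMeasure

variable {M : ℝ} {k : ℤ} {x : ℝ}

noncomputable def madicMeasure (M : ℝ) (k : ℤ) (x : ℝ) : Measure ℝ :=
  ENNReal.ofReal (M ^ (k : ℝ)) • volume.restrict (madicInterval M k x)

theorem integral_madicMeasure (hM : 0 ≤ M) (f : ℝ → ℝ) :
    ∫ u, f u ∂madicMeasure M k x = M ^ (k : ℝ) * ∫ u in madicInterval M k x, f u := by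
  rw [madicMeasure, integral_smul_measure, ENNReal.toReal_ofReal (Real.rpow_nonneg hM _),
    smul_eq_mul]

theorem isProbabilityMeasure_madicMeasure (hM : 0 < M) :
    IsProbabilityMeasure (madicMeasure M k x) := by
  constructor
  rw [madicMeasure, Measure.smul_apply, Measure.restrict_apply_univ, volume_madicInterval,
    smul_eq_mul, ← ENNReal.ofReal_mul (Real.rpow_nonneg hM.le _), ← Real.rpow_add hM,
    add_neg_cancel, Real.rpow_zero, ENNReal.ofReal_one]

theorem Continuous.integrable_madicMeasure {f : ℝ → ℝ} (hf : Continuous f) :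
    Integrable f (madicMeasure M k x) :=
  hf.integrableOn_Icc.smul_measure ENNReal.ofReal_ne_top

theorem ae_mem_madicInterval : ∀ᵐ u ∂madicMeasure M k x, u ∈ madicInterval M k x :=
  Measure.ae_smul_measure (ae_restrict_mem measurableSet_Icc) _

end MadicMeasure

section DoubleAvgDiff

variable {M : ℝ} {k k' : ℤ} {C : ℝ → ℝ → ℝ}

theorem doubleAvgDiff_eq_integral_integral (hM : 0 < M)
    (hC : Continuous fun p : ℝ × ℝ => C p.1 p.2) (x y : ℝ) :
    doubleAvgDiff M k k' C x y = ∫ u, ∫ w, (C x y - C u y - C x w + C u w)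
      ∂madicMeasure M k' y ∂madicMeasure M k x := by
  have := isProbabilityMeasure_madicMeasure (k := k) (x := x) hM
  have := isProbabilityMeasure_madicMeasure (k := k') (x := y) hM
  have hCint : Continuous fun u => ∫ w, C u w ∂madicMeasure M k' y := by
    simp only [integral_madicMeasure hM.le]
    exact continuous_const.mul (continuous_parametric_integral_of_continuous hC isCompact_Icc)
  rw [integral_integral_mixedDiff C x y
    (by fun_prop : Continuous (C · y)).integrable_madicMeasure
    (fun u => (by fun_prop : Continuous (C u)).integrable_madicMeasure)
    hCint.integrable_madicMeasure]
  simp only [doubleAvgDiff, integral_madicMeasure hM.le, Real.rpow_add hM, integral_const_mul]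
  ring

theorem abs_doubleAvgDiff_le (hM : 0 < M) {Cw g : ℝ → ℝ → ℝ}
    (hC : Continuous fun p : ℝ × ℝ => C p.1 p.2)
    (hCw : ∀ v w, HasDerivAt (fun w' => C v w') (Cw v w) w)
    (hg : ∀ v w, HasDerivAt (fun v' => Cw v' w) (g v w) v)
    (hgc : Continuous fun p : ℝ × ℝ => g p.1 p.2) {x y B : ℝ}
    (hB : ∀ v ∈ madicInterval M k x, ∀ t ∈ madicInterval M k' y, |g v t| ≤ B) :
    |doubleAvgDiff M k k' C x y| ≤ B * M ^ (-(k : ℝ)) * M ^ (-(k' : ℝ)) := by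
  have := isProbabilityMeasure_madicMeasure (k := k) (x := x) hM
  have := isProbabilityMeasure_madicMeasure (k := k') (x := y) hM
  have hx : x ∈ madicInterval M k x := mem_madicInterval hM
  have hy : y ∈ madicInterval M k' y := mem_madicInterval hM
  have hB₀ : 0 ≤ B := (abs_nonneg _).trans (hB x hx y hy)
  have hmixed : ∀ u ∈ madicInterval M k x, ∀ w ∈ madicInterval M k' y,
      |C x y - C u y - C x w + C u w| ≤ B * M ^ (-(k : ℝ)) * M ^ (-(k' : ℝ)) := by
    intro u hu w hw
    calc _ ≤ B * |x - u| * |y - w| := abs_mixedDiff_le hCw hg hgc fun v hv t ht =>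
          hB v (ordConnected_Icc.uIcc_subset hu hx hv) t (ordConnected_Icc.uIcc_subset hw hy ht)
      _ ≤ _ := by
        gcongr
        exacts [abs_sub_le_of_mem_madicInterval hx hu, abs_sub_le_of_mem_madicInterval hy hw]
  have hinner : ∀ u ∈ madicInterval M k x, ‖∫ w, (C x y - C u y - C x w + C u w)
      ∂madicMeasure M k' y‖ ≤ B * M ^ (-(k : ℝ)) * M ^ (-(k' : ℝ)) := fun u hu => by
    simpa using norm_integral_le_of_norm_le_const (ae_mem_madicInterval.mono fun w hw =>
      (Real.norm_eq_abs _).trans_le (hmixed u hu w hw))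
  rw [doubleAvgDiff_eq_integral_integral hM hC]
  simpa using norm_integral_le_of_norm_le_const (ae_mem_madicInterval.mono hinner)

end DoubleAvgDiff

/-- **Covariance bound for secondary fields** (Corollary 2.7, deterministic kernel form): fix
`M > 1`, an integer `r ≥ 0` and `A > 0`. There is a constant `K' > 0` depending only on
`A, r, M` such that for every `β < 1`, all integers `j ≤ k`, `j ≤ k'`, and every kernel
`C : ℝ × ℝ → ℝ` with continuous mixed second partial derivative `g = ∂_v ∂_w C` satisfying
`|g(v,w)| ≤ A M^{(2−2β)j}/(1+M^j|v−w|)^r`, one has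
`|(δ^k ⊗ δ^{k'} C)(x,y)| ≤ K' M^{−2βj} M^{−(k−j)} M^{−(k'−j)} / (1+M^j|x−y|)^r`. -/
theorem secondary_field_covariance_bound (M : ℝ) (hM : 1 < M) (r : ℕ)
    (A : ℝ) (hA : 0 < A) :
    ∃ K' : ℝ, 0 < K' ∧
      ∀ (β : ℝ), β < 1 →
      ∀ (j k k' : ℤ), j ≤ k → j ≤ k' →
      ∀ (C Cw g : ℝ → ℝ → ℝ),
        Continuous (fun p : ℝ × ℝ => C p.1 p.2) →
        (∀ v w : ℝ, HasDerivAt (fun w' => C v w') (Cw v w) w) →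
        (∀ v w : ℝ, HasDerivAt (fun v' => Cw v' w) (g v w) v) →
        Continuous (fun p : ℝ × ℝ => g p.1 p.2) →
        (∀ v w : ℝ,
          |g v w| ≤ A * M ^ ((2 - 2 * β) * (j : ℝ)) / (1 + M ^ (j : ℝ) * |v - w|) ^ r) →
        ∀ x y : ℝ,
          |doubleAvgDiff M k k' C x y|
            ≤ K' * M ^ (-2 * β * (j : ℝ)) * M ^ (-((k : ℝ) - (j : ℝ)))
                * M ^ (-((k' : ℝ) - (j : ℝ))) / (1 + M ^ (j : ℝ) * |x - y|) ^ r := by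
  refine ⟨A * 3 ^ r, by positivity,
    fun β _ j k k' hjk hjk' C Cw g hC hCw hg hgc hgb x y => ?_⟩
  have hM₀ : 0 < M := zero_lt_one.trans hM
  have hMj : 0 ≤ M ^ (j : ℝ) := by positivity
  have hgB : ∀ v ∈ madicInterval M k x, ∀ t ∈ madicInterval M k' y, |g v t|
      ≤ A * M ^ ((2 - 2 * β) * (j : ℝ)) * 3 ^ r / (1 + M ^ (j : ℝ) * |x - y|) ^ r := by
    intro v hv t ht
    have hweight := one_add_mul_abs_sub_le_three_mul hMj
      (rpow_mul_abs_sub_le_one_of_mem_madicInterval hM.le hjk (mem_madicInterval hM₀) hv)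
      (rpow_mul_abs_sub_le_one_of_mem_madicInterval hM.le hjk' ht (mem_madicInterval hM₀))
    calc |g v t|
      _ ≤ A * M ^ ((2 - 2 * β) * (j : ℝ)) / (1 + M ^ (j : ℝ) * |v - t|) ^ r := hgb v t
      _ = A * M ^ ((2 - 2 * β) * (j : ℝ)) * 3 ^ r / (3 * (1 + M ^ (j : ℝ) * |v - t|)) ^ r := by
        rw [mul_pow]; field_simp
      _ ≤ _ := by gcongr
  refine (abs_doubleAvgDiff_le hM₀ hC hCw hg hgc hgB).trans_eq ?_
  have hexp : M ^ ((2 - 2 * β) * (j : ℝ)) * M ^ (-(k : ℝ)) * M ^ (-(k' : ℝ))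
      = M ^ (-2 * β * (j : ℝ)) * M ^ (-((k : ℝ) - j)) * M ^ (-((k' : ℝ) - j)) := by
    simp only [← Real.rpow_add hM₀]
    ring_nf
  rw [div_mul_eq_mul_div, div_mul_eq_mul_div]
  congr 1
  linear_combination (A * 3 ^ r) * hexp
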